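/- Over a set of Boolean variables V, a family F of pairwise non-equivalent propositional formulas (as functions (V → Bool) → Bool) of size N admits a narrowing set of valuations T with ⌈log₂ N⌉ ≤ |T| ≤ N − 1 when N ≥ 2. -/

import Mathlib

/-!
Adding the formulas one at a time, a new formula either already differs on `T` from every earlier
one, or agrees on `T` with exactly one earlier formula `g`, and then one valuation separating it
from `g` suffices; this gives `|T| ≤ N - 1`. Conversely, restricting the formulas to a narrowing
set `T` is injective, so `N ≤ 2 ^ |T|`.
-/

def IsNarrowingSet {α β : Type*} (T : Finset α) (F : Finset (α → β)) : Prop :=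
  ∀ φ ∈ F, ∀ ψ ∈ F, φ ≠ ψ → ∃ v ∈ T, φ v ≠ ψ v

namespace IsNarrowingSet

variable {α β : Type*} {T : Finset α} {F : Finset (α → β)}

lemma mono {T' : Finset α} (hT : IsNarrowingSet T F) (hTT' : T ⊆ T') : IsNarrowingSet T' F :=
  fun φ hφ ψ hψ hne => (hT φ hφ ψ hψ hne).imp fun _ ⟨hv, hne⟩ => ⟨hTT' hv, hne⟩

lemma insert_of_forall_exists_ne [DecidableEq (α → β)] (hT : IsNarrowingSet T F) {f : α → β}
    (hf : ∀ g ∈ F, ∃ v ∈ T, f v ≠ g v) : IsNarrowingSet T (insert f F) := by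
  intro φ hφ ψ hψ hne
  rcases Finset.mem_insert.1 hφ with rfl | hφF <;> rcases Finset.mem_insert.1 hψ with rfl | hψF
  · exact absurd rfl hne
  · exact hf ψ hψF
  · obtain ⟨v, hv, hne⟩ := hf φ hφF
    exact ⟨v, hv, hne.symm⟩
  · exact hT φ hφF ψ hψF hne

/-- Since `T` narrows `F`, a function agreeing with `g ∈ F` on `T` already differs on `T` from
every other member of `F`. -/
lemma insert_of_eqOn [DecidableEq α] [DecidableEq (α → β)] (hT : IsNarrowingSet T F)
    {f g : α → β} (hg : g ∈ F) (hfg : ∀ v ∈ T, f v = g v) {w : α} (hw : f w ≠ g w) :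
    IsNarrowingSet (insert w T) (insert f F) := by
  refine (hT.mono (Finset.subset_insert w T)).insert_of_forall_exists_ne fun h hh => ?_
  by_cases hgh : g = h
  · exact ⟨w, Finset.mem_insert_self w T, hgh ▸ hw⟩
  · obtain ⟨v, hv, hne⟩ := hT g hg h hh hgh
    exact ⟨v, Finset.mem_insert_of_mem hv, hfg v hv ▸ hne⟩

lemma card_le_pow [Fintype β] (hT : IsNarrowingSet T F) :
    F.card ≤ Fintype.card β ^ T.card := by
  classical
  have hinj : Function.Injective fun (φ : F) (v : T) => (φ : α → β) v := by
    intro φ ψ h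
    by_contra hne
    obtain ⟨v, hv, hvne⟩ := hT φ φ.2 ψ ψ.2 (Subtype.coe_ne_coe.2 hne)
    exact hvne (congrFun h ⟨v, hv⟩)
  simpa using Fintype.card_le_of_injective _ hinj

end IsNarrowingSet

theorem exists_isNarrowingSet_card_le {α β : Type*} (F : Finset (α → β)) :
    ∃ T : Finset α, IsNarrowingSet T F ∧ T.card ≤ F.card - 1 := by
  classical
  induction F using Finset.induction_on with
  | empty => exact ⟨∅, fun φ hφ => absurd hφ (Finset.notMem_empty φ), le_rfl⟩
  | insert f F hfF ih =>
    obtain ⟨T, hT, hcard⟩ := ih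
    rw [Finset.card_insert_of_notMem hfF]
    by_cases hagree : ∃ g ∈ F, ∀ v ∈ T, f v = g v
    · obtain ⟨g, hg, hfg⟩ := hagree
      obtain ⟨w, hw⟩ := Function.ne_iff.1 (ne_of_mem_of_not_mem hg hfF).symm
      refine ⟨insert w T, hT.insert_of_eqOn hg hfg hw, ?_⟩
      have := Finset.card_pos.2 ⟨g, hg⟩
      have := Finset.card_insert_le w T
      omega
    · push Not at hagree
      exact ⟨T, hT.insert_of_forall_exists_ne hagree, by omega⟩

theorem propositional_narrowing_bounds_general {V : Type*}
    (F : Finset ((V → Bool) → Bool)) (N : ℕ) (hcard : F.card = N) :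
    ∃ T : Finset (V → Bool), Nat.clog 2 N ≤ T.card ∧ T.card ≤ N - 1 ∧
      ∀ φ ∈ F, ∀ ψ ∈ F, φ ≠ ψ → ∃ v ∈ T, φ v ≠ ψ v := by
  subst hcard
  obtain ⟨T, hT, hcard⟩ := exists_isNarrowingSet_card_le F
  have hpow : F.card ≤ 2 ^ T.card := by simpa using hT.card_le_pow
  exact ⟨T, (Nat.clog_le_iff_le_pow one_lt_two).2 hpow, hcard, hT⟩

/-- Over Boolean variables `V`, a family of `N ≥ 2` pairwise non-equivalent
propositional formulas admits a narrowing set `T` of valuations with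
`⌈log₂ N⌉ ≤ |T| ≤ N - 1`. -/
theorem propositional_narrowing_bounds {V : Type*} [Fintype V]
    (F : Finset ((V → Bool) → Bool)) (N : ℕ) (hN : 2 ≤ N) (hcard : F.card = N) :
    ∃ T : Finset (V → Bool), Nat.clog 2 N ≤ T.card ∧ T.card ≤ N - 1 ∧
      ∀ φ ∈ F, ∀ ψ ∈ F, φ ≠ ψ → ∃ v ∈ T, φ v ≠ ψ v :=
  propositional_narrowing_bounds_general F N hcard
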